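/- Let N ≥ 2 and β > 1 an algebraic number, and let t_1⋯t_p be an admissible block with generalized Thue–Morse sequence (θ_ℓ). Then the identity ∑_{i=1}^∞ τ_i β^{-pi} = (1 − β^{-p} − ∑_{q=1}^p t_q β^{-q}) / ((1 − β^{-p})(1 − β^{-p} + ∑_{q=1}^p (N−1−2t_q) β^{-q})) holds whenever ∑_{ℓ=1}^∞ θ_ℓ β^{-ℓ} = 1, where (τ_i) is the classical Thue–Morse sequence. -/

import Mathlib

/-- Reflection of a block: each digit `c` becomes `N - 1 - c`. -/
def reflB (N : ℕ) (w : List ℕ) : List ℕ := w.map (fun c => N - 1 - c)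

/-- The block `w` with its last digit incremented by one. -/
def plusB (w : List ℕ) : List ℕ := w.dropLast ++ [w.getLast! + 1]

/-- The `i`-th cyclic rotation of the block `w` (0-indexed). -/
def rotB (w : List ℕ) (i : ℕ) : List ℕ := w.drop i ++ w.take i

/-- The lexicographic inequalities defining admissibility of a block. -/
def AdmissibleIneq (N : ℕ) (w : List ℕ) : Prop :=
  ∀ i < w.length,
    reflB N w ≤ rotB w i ∧ plusB (w.drop i) ++ reflB N (w.take i) ≤ plusB w

/-- An admissible block in `{0, …, N-1}`. -/
def Admissible (N : ℕ) (w : List ℕ) : Prop :=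
  w ≠ [] ∧ (∀ c ∈ w, c < N) ∧ w.getLast! < N - 1 ∧ AdmissibleIneq N w

/-- Prefixes of the generalized Thue–Morse sequence generated by `plusB w`:
`gtmBlock N w n` is the prefix `θ_1 ⋯ θ_{2^n p}`. -/
def gtmBlock (N : ℕ) (w : List ℕ) : ℕ → List ℕ
  | 0 => plusB w
  | n + 1 => gtmBlock N w n ++ plusB (reflB N (gtmBlock N w n))

/-- The generalized Thue–Morse sequence generated by `plusB w`, 0-indexed:
`gtm N w n = θ_{n+1}`. -/
def gtm (N : ℕ) (w : List ℕ) : ℕ → ℕ := fun n => (gtmBlock N w n).getD n 0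

/-- Strict lexicographic order on infinite sequences of digits. -/
def seqLt (a b : ℕ → ℕ) : Prop := ∃ n, (∀ k < n, a k = b k) ∧ a n < b n

/-- Lexicographic order on infinite sequences of digits. -/
def seqLe (a b : ℕ → ℕ) : Prop := seqLt a b ∨ a = b

/-- Shift of a sequence by `k` places. -/
def shift (a : ℕ → ℕ) (k : ℕ) : ℕ → ℕ := fun n => a (n + k)

/-- The periodic sequence `w^∞` obtained by repeating the block `w`. -/
def per (w : List ℕ) : ℕ → ℕ := fun n => w.getD (n % w.length) 0

/-- Reflection of an infinite sequence. -/
def reflSeq (N : ℕ) (a : ℕ → ℕ) : ℕ → ℕ := fun n => N - 1 - a n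

/-- The classical Thue–Morse sequence: parity of the binary digit sum. -/
def tm (i : ℕ) : ℕ := (Nat.digits 2 i).sum % 2

/-- Number of length-`n` words appearing in sequences of `Z`. -/
noncomputable def wordCount (Z : Set (ℕ → ℕ)) (n : ℕ) : ℕ :=
  Set.ncard { u : List ℕ | u.length = n ∧ ∃ d ∈ Z, ∀ k < n, u.getD k 0 = d k }

/-- `Z` has topological entropy `h`. -/
def hasEntropy (Z : Set (ℕ → ℕ)) (h : ℝ) : Prop :=
  Filter.Tendsto (fun n : ℕ => Real.log (wordCount Z n) / n) Filter.atTop (nhds h)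

/-!
Write `p = |w|`, `x = β^{-p}`, `T = ∑ t_q β^{-q}` and `D = ∑ (N-1-2t_q) β^{-q}`. Cut into blocks
of length `p`, the `i`-th block of `θ` is `w` or its reflection according to `τ_i`, with its last
digit raised by `τ_{i+1} - τ_i`; it therefore contributes
`x^i (T + τ_i D) + (τ_{i+1} - τ_i) x^{i+1}` to the expansion of `1`. Summed over `i`, the
corrections telescope against `G = ∑ τ_i x^i`, and `1 = T/(1-x) + (1 - x + D) G` is solved for `G`.
The factor `1 - x + D` cannot vanish: otherwise `T = 1 - x = -D`, while
`T + D = ∑ (N-1-t_q) β^{-q} > 0` because `t_p < N - 1`.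
-/

theorem tm_zero : tm 0 = 0 := rfl

theorem tm_one : tm 1 = 1 := by simp [tm]

theorem tm_le_one (i : ℕ) : tm i ≤ 1 := Nat.le_of_lt_succ (Nat.mod_lt _ Nat.two_pos)

theorem tm_two_mul (i : ℕ) : tm (2 * i) = tm i := by
  rcases Nat.eq_zero_or_pos i with rfl | hi
  · rfl
  · rw [tm, Nat.digits_def' one_lt_two (by omega)]
    simp [tm]

theorem tm_two_mul_add_one (i : ℕ) : tm (2 * i + 1) = 1 - tm i := by
  have hmod : (2 * i + 1) % 2 = 1 := by omega
  have hdiv : (2 * i + 1) / 2 = i := by omega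
  rw [tm, Nat.digits_def' one_lt_two (by omega), hmod, hdiv, List.sum_cons, tm]
  omega

theorem tm_two_pow_add {n i : ℕ} (hi : i < 2 ^ n) : tm (2 ^ n + i) = 1 - tm i := by
  induction n generalizing i with
  | zero =>
    obtain rfl : i = 0 := by omega
    rfl
  | succ n ih =>
    obtain ⟨j, rfl | rfl⟩ := Nat.even_or_odd' i <;>
      have hj : j < 2 ^ n := by rw [pow_succ] at hi; omega
    · rw [pow_succ, mul_comm _ 2, ← mul_add, tm_two_mul, tm_two_mul, ih hj]
    · rw [pow_succ, mul_comm _ 2, ← add_assoc, ← mul_add, tm_two_mul_add_one,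
        tm_two_mul_add_one, ih hj]

theorem tm_two_pow (n : ℕ) : tm (2 ^ n) = 1 := by
  simpa [tm_zero] using tm_two_pow_add (Nat.two_pow_pos n)

theorem summable_tm_mul_pow {x : ℝ} (hx0 : 0 ≤ x) (hx1 : x < 1) :
    Summable fun i => (tm i : ℝ) * x ^ i :=
  (summable_geometric_of_lt_one hx0 hx1).of_nonneg_of_le (fun i => by positivity)
    fun i => mul_le_of_le_one_left (by positivity) (by exact_mod_cast tm_le_one i)

theorem plusB_concat (v : List ℕ) (c : ℕ) : plusB (v ++ [c]) = v ++ [c + 1] := by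
  simp [plusB]

theorem plusB_append (v : List ℕ) {u : List ℕ} (hu : u ≠ []) :
    plusB (v ++ u) = v ++ plusB u := by
  obtain ⟨u, c, rfl⟩ := u.eq_nil_or_concat'.resolve_left hu
  rw [← List.append_assoc, plusB_concat, plusB_concat, List.append_assoc]

theorem reflB_append (N : ℕ) (v u : List ℕ) : reflB N (v ++ u) = reflB N v ++ reflB N u :=
  List.map_append

theorem length_reflB (N : ℕ) (w : List ℕ) : (reflB N w).length = w.length :=
  List.length_map _

theorem length_plusB {w : List ℕ} (hw : w ≠ []) : (plusB w).length = w.length := by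
  obtain ⟨v, c, rfl⟩ := w.eq_nil_or_concat'.resolve_left hw
  simp [plusB_concat]

theorem reflB_reflB {N : ℕ} {w : List ℕ} (hmem : ∀ c ∈ w, c < N) : reflB N (reflB N w) = w := by
  rw [reflB, reflB, List.map_map]
  conv_rhs => rw [← List.map_id w]
  refine List.map_congr_left fun c hc => ?_
  have := hmem c hc
  simp only [Function.comp_apply, id]
  omega

theorem plusB_reflB_plusB {N : ℕ} {w : List ℕ} (hw : w ≠ []) (hlast : w.getLast! < N - 1) :
    plusB (reflB N (plusB w)) = reflB N w := by
  obtain ⟨v, c, rfl⟩ := w.eq_nil_or_concat'.resolve_left hw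
  simp only [List.getLast!_eq_getLast?_getD, List.getLast?_concat, Option.getD_some] at hlast
  simp only [plusB_concat, reflB, List.map_append, List.map_cons, List.map_nil]
  congr 2
  omega

theorem forall_mem_plusB_lt {N : ℕ} {w : List ℕ} (hmem : ∀ c ∈ w, c < N)
    (hlast : w.getLast! < N - 1) : ∀ c ∈ plusB w, c < N := by
  intro c hc
  rcases List.mem_append.mp hc with hc | hc
  · exact hmem c (List.dropLast_subset w hc)
  · rw [List.mem_singleton.mp hc]; omega

theorem getD_reflB (N : ℕ) {w : List ℕ} {r : ℕ} (hr : r < w.length) :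
    (reflB N w).getD r 0 = N - 1 - w.getD r 0 := by
  rw [List.getD_eq_getElem _ _ (by rwa [length_reflB]), List.getD_eq_getElem _ _ hr]
  simp [reflB]

theorem getD_plusB {w : List ℕ} (hw : w ≠ []) (r : ℕ) :
    (plusB w).getD r 0 = w.getD r 0 + if r = w.length - 1 then 1 else 0 := by
  obtain ⟨v, c, rfl⟩ := w.eq_nil_or_concat'.resolve_left hw
  rw [plusB_concat, List.length_append, List.length_singleton, Nat.add_sub_cancel]
  rcases lt_trichotomy r v.length with hr | rfl | hr
  · rw [List.getD_append _ _ _ _ hr, List.getD_append _ _ _ _ hr, if_neg hr.ne, add_zero]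
  · simp
  · rw [List.getD_eq_default _ _ (by simpa using hr), List.getD_eq_default _ _ (by simpa using hr),
      if_neg hr.ne']

theorem List.getD_flatMap_range_mul_add {α : Type*} {f : ℕ → List α} {p : ℕ}
    (hf : ∀ i, (f i).length = p) {m i r : ℕ} (hi : i < m) (hr : r < p) (d : α) :
    ((List.range m).flatMap f).getD (i * p + r) d = (f i).getD r d := by
  induction m with
  | zero => omega
  | succ m ih =>
    have hlen : ((List.range m).flatMap f).length = m * p := by
      simp [List.length_flatMap, hf]
    rw [List.range_succ, List.flatMap_append, List.flatMap_singleton]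
    rcases (Nat.lt_succ_iff_lt_or_eq.mp hi) with hi | rfl
    · rw [List.getD_append _ _ _ _ (by rw [hlen]; nlinarith), ih hi]
    · rw [List.getD_append_right _ _ _ _ (by omega), hlen, Nat.add_sub_cancel_left]

/-- The block `θ_{ip+1} ⋯ θ_{ip+p}` is `digitBlock N w τ_i τ_{i+1}`: the block `w` or its
reflection according to `τ_i`, with the last digit raised by `τ_{i+1} - τ_i`. -/
def digitBlock (N : ℕ) (w : List ℕ) (a b : ℕ) : List ℕ :=
  if a = 0 then (if b = 0 then w else plusB w)
  else (if b = 0 then reflB N (plusB w) else reflB N w)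

section digitBlock

variable {N : ℕ} {w : List ℕ}

theorem length_digitBlock (hw : w ≠ []) (a b : ℕ) : (digitBlock N w a b).length = w.length := by
  unfold digitBlock
  split_ifs <;> simp only [length_reflB, length_plusB hw]

theorem plusB_digitBlock_zero (hw : w ≠ []) (hlast : w.getLast! < N - 1) (a : ℕ) :
    plusB (digitBlock N w a 0) = digitBlock N w a 1 := by
  by_cases ha : a = 0 <;> simp only [digitBlock, ha, if_true, if_false, one_ne_zero]
  exact plusB_reflB_plusB hw hlast

theorem reflB_digitBlock (hmem : ∀ c ∈ w, c < N) (hlast : w.getLast! < N - 1) {a b : ℕ}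
    (ha : a ≤ 1) (hb : b ≤ 1) :
    reflB N (digitBlock N w a b) = digitBlock N w (1 - a) (1 - b) := by
  interval_cases a <;> interval_cases b <;> simp only [digitBlock] <;> norm_num
  · exact reflB_reflB (forall_mem_plusB_lt hmem hlast)
  · exact reflB_reflB hmem

theorem gtmBlock_eq_flatMap (hw : w ≠ []) (hmem : ∀ c ∈ w, c < N) (hlast : w.getLast! < N - 1)
    (n : ℕ) :
    gtmBlock N w n = (List.range (2 ^ n)).flatMap fun i => digitBlock N w (tm i) (tm (i + 1)) := by
  induction n with
  | zero => simp [gtmBlock, digitBlock, tm_zero, tm_one]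
  | succ n ih =>
    obtain ⟨m, hm⟩ : ∃ m, 2 ^ n = m + 1 := ⟨2 ^ n - 1, by have := Nat.two_pow_pos n; omega⟩
    have hrefl : ∀ j ≤ m, reflB N (digitBlock N w (tm j) (tm (j + 1))) =
        digitBlock N w (tm (2 ^ n + j)) (1 - tm (j + 1)) := fun j hj => by
      rw [reflB_digitBlock hmem hlast (tm_le_one _) (tm_le_one _), tm_two_pow_add (by omega)]
    have hnext : ∀ j < m, 1 - tm (j + 1) = tm (2 ^ n + j + 1) := fun j hj => by
      rw [add_assoc, tm_two_pow_add (by omega)]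
    have htop : tm (2 ^ n + m + 1) = 1 := by
      rw [show 2 ^ n + m + 1 = 2 ^ (n + 1) by rw [pow_succ]; omega, tm_two_pow]
    -- Reflecting block `j < 2^n` gives block `2^n + j`, except that the last one lacks the
    -- raised digit coming from `τ_{2^{n+1}} = 1`; `plusB` supplies it.
    have hsecond : plusB (reflB N ((List.range (2 ^ n)).flatMap
          fun j => digitBlock N w (tm j) (tm (j + 1)))) =
        (List.range (2 ^ n)).flatMap
          fun j => digitBlock N w (tm (2 ^ n + j)) (tm (2 ^ n + j + 1)) := by
      have hne : reflB N (digitBlock N w (tm m) (tm (m + 1))) ≠ [] := by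
        rw [← List.length_pos_iff, length_reflB, length_digitBlock hw]
        exact List.length_pos_iff.mpr hw
      rw [hm, List.range_succ, List.flatMap_append, List.flatMap_append, List.flatMap_singleton,
        List.flatMap_singleton, reflB_append, plusB_append _ hne, hrefl m le_rfl, ← hm,
        tm_two_pow, Nat.sub_self, plusB_digitBlock_zero hw hlast, htop, reflB, List.map_flatMap]
      congr 1
      refine List.flatMap_congr fun j hj => ?_
      rw [List.mem_range] at hj
      rw [← reflB, hrefl j hj.le, hnext j hj]
    rw [gtmBlock, ih, hsecond, pow_succ, mul_two, List.range_add, List.flatMap_append,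
      List.flatMap_map]

theorem gtm_mul_add (hw : w ≠ []) (hmem : ∀ c ∈ w, c < N)
    (hlast : w.getLast! < N - 1) (i : ℕ) {r : ℕ} (hr : r < w.length) :
    gtm N w (i * w.length + r) = (digitBlock N w (tm i) (tm (i + 1))).getD r 0 := by
  have hi : i < 2 ^ (i * w.length + r) :=
    (Nat.le_mul_of_pos_right i (List.length_pos_iff.mpr hw)).trans_lt
      ((Nat.le_add_right _ _).trans_lt Nat.lt_two_pow_self)
  rw [gtm, gtmBlock_eq_flatMap hw hmem hlast,
    List.getD_flatMap_range_mul_add (fun _ => length_digitBlock hw _ _) hi hr]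

theorem cast_getD_digitBlock (hw : w ≠ []) (hmem : ∀ c ∈ w, c < N)
    (hlast : w.getLast! < N - 1) {a b : ℕ} (ha : a ≤ 1) (hb : b ≤ 1) {r : ℕ}
    (hr : r < w.length) :
    ((digitBlock N w a b).getD r 0 : ℝ) =
      w.getD r 0 + a * ((N : ℝ) - 1 - 2 * w.getD r 0) +
        if r = w.length - 1 then (b : ℝ) - a else 0 := by
  have ht : w.getD r 0 < N := by
    rw [List.getD_eq_getElem _ _ hr]; exact hmem _ (List.getElem_mem hr)
  by_cases hlr : r = w.length - 1
  · have htlast : w.getD r 0 + 1 ≤ N - 1 := by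
      subst hlr
      simpa [List.getLast!_eq_getLast?_getD, List.getLast?_eq_getElem?] using hlast
    interval_cases a <;> interval_cases b <;>
      simp only [digitBlock, if_true, one_ne_zero, if_false, if_pos hlr, getD_reflB N hr,
        getD_reflB N ((length_plusB hw).symm ▸ hr), getD_plusB hw] <;>
      push_cast [Nat.cast_sub htlast, Nat.cast_sub (by omega : w.getD r 0 ≤ N - 1),
        Nat.cast_sub (by omega : 1 ≤ N)] <;> ring
  · interval_cases a <;> interval_cases b <;>
      simp only [digitBlock, if_true, one_ne_zero, if_false, if_neg hlr, add_zero, getD_reflB N hr,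
        getD_reflB N ((length_plusB hw).symm ▸ hr), getD_plusB hw] <;>
      push_cast [Nat.cast_sub (by omega : w.getD r 0 ≤ N - 1), Nat.cast_sub (by omega : 1 ≤ N)] <;>
      ring

end digitBlock

theorem HasSum.sum_range_mul_add {α : Type*} [AddCommMonoid α] [TopologicalSpace α]
    [ContinuousAdd α] [RegularSpace α] {f : ℕ → α} {a : α} (hf : HasSum f a) {p : ℕ}
    (hp : p ≠ 0) : HasSum (fun i => ∑ r ∈ Finset.range p, f (i * p + r)) a := by
  have : NeZero p := ⟨hp⟩
  refine ((Nat.divModEquiv p).symm.hasSum_iff.mpr hf).prod_fiberwise fun i => ?_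
  rw [← Fin.sum_univ_eq_sum_range]
  exact hasSum_fintype _

theorem sum_range_block_div_pow {β : ℝ} (hβ : β ≠ 0) {p : ℕ} (hp : p ≠ 0) (i : ℕ)
    (t c : ℕ → ℝ) (a b : ℝ) :
    ∑ r ∈ Finset.range p, (t r + a * c r + if r = p - 1 then b - a else 0) / β ^ (i * p + r + 1) =
      ((β ^ p)⁻¹) ^ i * (∑ r ∈ Finset.range p, t r / β ^ (r + 1) +
        a * ∑ r ∈ Finset.range p, c r / β ^ (r + 1)) + (b - a) * ((β ^ p)⁻¹) ^ (i + 1) := by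
  have hterm : ∀ r, (t r + a * c r + if r = p - 1 then b - a else 0) / β ^ (i * p + r + 1) =
      ((β ^ p)⁻¹) ^ i * (t r / β ^ (r + 1)) + ((β ^ p)⁻¹) ^ i * (a * (c r / β ^ (r + 1))) +
        if r = p - 1 then (b - a) * ((β ^ p)⁻¹) ^ i / β ^ (r + 1) else 0 := fun r => by
    rw [show β ^ (i * p + r + 1) = (β ^ p) ^ i * β ^ (r + 1) by ring, inv_pow]
    split_ifs <;> field_simp
    ring
  simp only [hterm, Finset.sum_add_distrib, ← Finset.mul_sum, Finset.sum_ite_eq',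
    Finset.mem_range, Nat.sub_lt (Nat.pos_of_ne_zero hp) one_pos, if_true,
    Nat.sub_add_cancel (Nat.one_le_iff_ne_zero.mpr hp)]
  rw [pow_succ, inv_pow]
  field_simp

theorem hasSum_geometric_add_telescope {x T D G : ℝ} {a : ℕ → ℝ} (hx : |x| < 1) (ha : a 0 = 0)
    (hG : HasSum (fun i => a i * x ^ i) G) :
    HasSum (fun i => x ^ i * (T + a i * D) + (a (i + 1) - a i) * x ^ (i + 1))
      (T * (1 - x)⁻¹ + (1 - x + D) * G) := by
  have hshift : HasSum (fun i => a (i + 1) * x ^ (i + 1)) G := by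
    simpa [ha] using (hasSum_nat_add_iff' 1).mpr hG
  rw [show T * (1 - x)⁻¹ + (1 - x + D) * G = T * (1 - x)⁻¹ + D * G + (G - x * G) by ring]
  exact (((hasSum_geometric_of_abs_lt_one hx).mul_left T).add (hG.mul_left D)).add
    (hshift.sub (hG.mul_left x)) |>.congr_fun fun i => by ring

theorem eq_div_of_add_mul_eq_one {x T D G : ℝ} (hx : x ≠ 1) (hTD : T + D ≠ 0)
    (h : T * (1 - x)⁻¹ + (1 - x + D) * G = 1) :
    G = (1 - x - T) / ((1 - x) * (1 - x + D)) := by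
  have hx' : 1 - x ≠ 0 := sub_ne_zero.mpr hx.symm
  have hT : T = (1 - x) * (1 - (1 - x + D) * G) := by
    rw [← eq_sub_of_add_eq h]; field_simp
  have hE : 1 - x + D ≠ 0 := fun hE => hTD (by rw [hT, hE]; linear_combination hE)
  rw [eq_div_iff (mul_ne_zero hx' hE), hT]
  ring

section expansion

variable {N : ℕ} {w : List ℕ} {β : ℝ}

theorem sum_range_gtm_div_pow (hw : w ≠ []) (hmem : ∀ c ∈ w, c < N)
    (hlast : w.getLast! < N - 1) (hβ : β ≠ 0) (i : ℕ) :
    ∑ r ∈ Finset.range w.length, (gtm N w (i * w.length + r) : ℝ) / β ^ (i * w.length + r + 1) =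
      ((β ^ w.length)⁻¹) ^ i * (∑ q ∈ Finset.range w.length, (w.getD q 0 : ℝ) / β ^ (q + 1) +
        tm i * ∑ q ∈ Finset.range w.length, ((N : ℝ) - 1 - 2 * w.getD q 0) / β ^ (q + 1)) +
      ((tm (i + 1) : ℝ) - tm i) * ((β ^ w.length)⁻¹) ^ (i + 1) := by
  rw [← sum_range_block_div_pow hβ (List.length_pos_iff.mpr hw).ne']
  refine Finset.sum_congr rfl fun r hr => ?_
  rw [gtm_mul_add hw hmem hlast i (Finset.mem_range.mp hr),
    cast_getD_digitBlock hw hmem hlast (tm_le_one _) (tm_le_one _) (Finset.mem_range.mp hr)]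

theorem sum_range_reflected_digit_div_pow_pos (hw : w ≠ []) (hmem : ∀ c ∈ w, c < N)
    (hlast : w.getLast! < N - 1) (hβ : 0 < β) :
    0 < ∑ q ∈ Finset.range w.length, ((N : ℝ) - 1 - w.getD q 0) / β ^ (q + 1) := by
  have hdigit : ∀ q, w.getD q 0 ≤ N - 1 := fun q => by
    rcases lt_or_ge q w.length with hq | hq
    · rw [List.getD_eq_getElem _ _ hq]; exact Nat.le_sub_one_of_lt (hmem _ (List.getElem_mem hq))
    · rw [List.getD_eq_default _ _ hq]; exact Nat.zero_le _
  have hN : 1 ≤ N := by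
    obtain ⟨c, hc⟩ := List.exists_mem_of_ne_nil w hw
    exact (Nat.zero_le c).trans_lt (hmem c hc)
  have hlast' : w.getD (w.length - 1) 0 < N - 1 := by
    simpa [List.getLast!_eq_getLast?_getD, List.getLast?_eq_getElem?] using hlast
  refine Finset.sum_pos' (fun q _ => div_nonneg ?_ (by positivity)) ⟨w.length - 1, ?_, ?_⟩
  · rw [sub_nonneg, ← Nat.cast_pred hN]
    exact_mod_cast hdigit q
  · exact Finset.mem_range.mpr (Nat.sub_lt (List.length_pos_iff.mpr hw) one_pos)
  · refine div_pos ?_ (by positivity)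
    rw [sub_pos, ← Nat.cast_pred hN]
    exact_mod_cast hlast'

end expansion

theorem stmt18_general (N : ℕ) (β : ℝ) (hβ : 1 < β)
    (w : List ℕ) (hadm : Admissible N w)
    (hsum : ∑' ℓ : ℕ, (gtm N w ℓ : ℝ) / β ^ (ℓ + 1) = 1) :
    ∑' i : ℕ, (tm (i + 1) : ℝ) / β ^ (w.length * (i + 1)) =
      (1 - (β ^ w.length)⁻¹ -
          ∑ q ∈ Finset.range w.length, (w.getD q 0 : ℝ) / β ^ (q + 1)) /
        ((1 - (β ^ w.length)⁻¹) *
          (1 - (β ^ w.length)⁻¹ +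
            ∑ q ∈ Finset.range w.length,
              ((N : ℝ) - 1 - 2 * (w.getD q 0 : ℝ)) / β ^ (q + 1))) := by
  obtain ⟨hw, hmem, hlast, -⟩ := hadm
  set x := (β ^ w.length)⁻¹ with hx
  have hx0 : 0 ≤ x := by positivity
  have hx1 : x < 1 := inv_lt_one_of_one_lt₀ (one_lt_pow₀ hβ (List.length_pos_iff.mpr hw).ne')
  have hτ := summable_tm_mul_pow hx0 hx1
  -- A non-summable series has `tsum` equal to `0`, so `hsum` forces summability.
  have hθ : HasSum (fun ℓ => (gtm N w ℓ : ℝ) / β ^ (ℓ + 1)) 1 := by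
    by_cases h : Summable fun ℓ => (gtm N w ℓ : ℝ) / β ^ (ℓ + 1)
    · exact hsum ▸ h.hasSum
    · simp [tsum_eq_zero_of_not_summable h] at hsum
  have hblocks := (hθ.sum_range_mul_add (List.length_pos_iff.mpr hw).ne').congr_fun
    fun i => (sum_range_gtm_div_pow hw hmem hlast (by positivity) i).symm
  have hlhs : ∑' i : ℕ, (tm (i + 1) : ℝ) / β ^ (w.length * (i + 1)) = ∑' i, (tm i : ℝ) * x ^ i := by
    rw [hτ.tsum_eq_zero_add, tm_zero, Nat.cast_zero, zero_mul, zero_add]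
    refine tsum_congr fun i => ?_
    rw [hx, inv_pow, ← pow_mul, div_eq_mul_inv]
  rw [hlhs]
  refine eq_div_of_add_mul_eq_one hx1.ne ?_ ((hasSum_geometric_add_telescope
    (abs_lt.mpr ⟨by linarith, hx1⟩) (by simp [tm_zero]) hτ.hasSum).unique hblocks)
  rw [← Finset.sum_add_distrib]
  exact ((sum_range_reflected_digit_div_pow_pos hw hmem hlast (by positivity)).trans_eq
    (Finset.sum_congr rfl fun q _ => by ring)).ne'

/-- the series identity from the proof of Theorem 2.4 — if the
generalized Thue–Morse sequence is an expansion of `1` in base `β`, then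
`∑ τ_i β^{-pi}` equals the stated rational expression in `β`. -/
theorem stmt18 (N : ℕ) (hN : 2 ≤ N) (β : ℝ) (hβ : 1 < β) (halg : IsAlgebraic ℚ β)
    (w : List ℕ) (hadm : Admissible N w)
    (hsum : ∑' ℓ : ℕ, (gtm N w ℓ : ℝ) / β ^ (ℓ + 1) = 1) :
    ∑' i : ℕ, (tm (i + 1) : ℝ) / β ^ (w.length * (i + 1)) =
      (1 - (β ^ w.length)⁻¹ -
          ∑ q ∈ Finset.range w.length, (w.getD q 0 : ℝ) / β ^ (q + 1)) /
        ((1 - (β ^ w.length)⁻¹) *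
          (1 - (β ^ w.length)⁻¹ +
            ∑ q ∈ Finset.range w.length,
              ((N : ℝ) - 1 - 2 * (w.getD q 0 : ℝ)) / β ^ (q + 1))) :=
  stmt18_general N β hβ w hadm hsum
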